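/- arXiv:0901.4192 — 3 statements merged into one kernel-verified Lean document; each statement's English description precedes it below -/
import Mathlib

section
/- If an n×n symmetric real matrix R with zero diagonal satisfies ρ(|R|) < 1 (walk-summability), then I - R is positive definite. -/
/-!
Bound the quadratic form of `R` by that of `|R|`: `xᵀ R x ≤ |x|ᵀ |R| |x|`. Since `|R|` is
symmetric, its quadratic form is at most its largest eigenvalue times `‖x‖²`, and every real
eigenvalue is bounded by the spectral radius `ρ(|R|) < 1`. Hence `xᵀ R x < xᵀ x` for `x ≠ 0`,
i.e. `I - R` is positive definite.
-/

open Matrix Filter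

noncomputable def specRad {n : ℕ} (M : Matrix (Fin n) (Fin n) ℝ) : ℝ :=
  sSup ((fun z => ‖z‖) '' spectrum ℂ (M.map Complex.ofReal))

open scoped MatrixOrder

namespace Matrix

variable {n : Type*} [Fintype n]

theorem dotProduct_mulVec_le_abs (A : Matrix n n ℝ) (x y : n → ℝ) :
    x ⬝ᵥ A *ᵥ y ≤ |x| ⬝ᵥ A.map abs *ᵥ |y| := by
  simp only [dotProduct, mulVec, Finset.mul_sum]
  refine Finset.sum_le_sum fun i _ => Finset.sum_le_sum fun j _ => ?_
  calc x i * (A i j * y j) ≤ |x i * (A i j * y j)| := le_abs_self _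
    _ = |x| i * (A.map abs i j * |y| j) := by simp [abs_mul]

theorem abs_dotProduct_abs (x : n → ℝ) : |x| ⬝ᵥ |x| = x ⬝ᵥ x := by
  simp [dotProduct, abs_mul_abs_self]

variable [DecidableEq n]

theorem ofReal_mem_spectrum_map_ofReal {M : Matrix n n ℝ} {t : ℝ} (ht : t ∈ spectrum ℝ M) :
    (t : ℂ) ∈ spectrum ℂ (M.map Complex.ofReal) := by
  rw [mem_spectrum_iff_isRoot_charpoly] at ht ⊢
  rw [show M.map Complex.ofReal = M.map Complex.ofRealHom from rfl, charpoly_map]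
  exact ht.map

theorem IsHermitian.dotProduct_mulVec_le {S : Matrix n n ℝ} (hS : S.IsHermitian) {r : ℝ}
    (hr : ∀ t ∈ spectrum ℝ S, t ≤ r) (x : n → ℝ) : x ⬝ᵥ S *ᵥ x ≤ r * (x ⬝ᵥ x) := by
  have hpsd : (algebraMap ℝ _ r - S).PosSemidef :=
    le_algebraMap_of_spectrum_le hr (ha := hS.isSelfAdjoint)
  have := hpsd.dotProduct_mulVec_nonneg x
  simp only [star_trivial, Algebra.algebraMap_eq_smul_one, sub_mulVec, smul_mulVec, one_mulVec,
    dotProduct_sub, dotProduct_smul, smul_eq_mul] at this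
  linarith

end Matrix

theorem le_specRad_of_mem_spectrum {n : ℕ} {M : Matrix (Fin n) (Fin n) ℝ} {t : ℝ}
    (ht : t ∈ spectrum ℝ M) : t ≤ specRad M :=
  calc t ≤ ‖(t : ℂ)‖ := by simpa using le_abs_self t
    _ ≤ specRad M :=
      le_csSup ((finite_spectrum _).image _).bddAbove ⟨_, ofReal_mem_spectrum_map_ofReal ht, rfl⟩

theorem walk_summable_posDef_general {n : ℕ} (R : Matrix (Fin n) (Fin n) ℝ)
    (hsym : R.IsSymm)
    (hws : specRad (R.map (fun x => |x|)) < 1) :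
    (1 - R).PosDef := by
  have hR : R.IsHermitian := isHermitian_iff_isSymm.mpr hsym
  have habs : (R.map abs).IsHermitian := isHermitian_iff_isSymm.mpr (hsym.map _)
  refine PosDef.of_dotProduct_mulVec_pos (isHermitian_one.sub hR) fun x hx => ?_
  have hxx : 0 < x ⬝ᵥ x := by simpa using dotProduct_star_self_pos_iff.mpr hx
  have hquad : x ⬝ᵥ R *ᵥ x < x ⬝ᵥ x :=
    calc x ⬝ᵥ R *ᵥ x ≤ |x| ⬝ᵥ R.map abs *ᵥ |x| := dotProduct_mulVec_le_abs R x x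
      _ ≤ specRad (R.map abs) * (|x| ⬝ᵥ |x|) :=
        habs.dotProduct_mulVec_le (fun _ => le_specRad_of_mem_spectrum) |x|
      _ < x ⬝ᵥ x := by rw [abs_dotProduct_abs]; nlinarith
  simpa [sub_mulVec, dotProduct_sub] using hquad

theorem walk_summable_posDef {n : ℕ} (R : Matrix (Fin n) (Fin n) ℝ)
    (hsym : R.IsSymm) (hdiag : ∀ i, R i i = 0)
    (hws : specRad (R.map (fun x => |x|)) < 1) :
    (1 - R).PosDef :=
  walk_summable_posDef_general R hsym hws
end

section
/- Let J ≻ 0 and Γ ⪰ 0 be n×n real symmetric matrices, and let H = (J+Γ)^{-1/2} Γ (J+Γ)^{-1/2}. If λ is an eigenvalue of H, then λ ≠ 1, λ ∈ [0,1), and λ/(1-λ) is an eigenvalue of Γ^{1/2} J^{-1} Γ^{1/2}. -/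
/-!
Write `S = (J + Γ)^{1/2}`. An eigenvector `v` of `H = S⁻¹ Γ S⁻¹` gives `u = S⁻¹ v ≠ 0` with
`Γ u = λ (J + Γ) u`. Pairing with `u` gives `uᵀΓu = λ (uᵀJu + uᵀΓu)` with `uᵀΓu ≥ 0` and
`uᵀJu > 0`, so `0 ≤ λ < 1`, and then `Γ u = μ J u` with `μ = λ / (1 - λ)`. Finally, with
`T = Γ^{1/2}`, the vector `T u` satisfies `T J⁻¹ T (T u) = T J⁻¹ Γ u = μ T u`; if `T u = 0`, then
`Γ u = 0`, so `μ = 0` and `u` itself is a null vector of `T J⁻¹ T`.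
-/

open Matrix

open scoped ComplexOrder in
/-- The positive semidefinite square root of a positive semidefinite matrix
(the definition `Matrix.PosSemidef.sqrt` of the older Mathlib, since removed). -/
noncomputable def Matrix.PosSemidef.sqrt {n 𝕜 : Type*} [Fintype n] [DecidableEq n] [RCLike 𝕜]
    {A : Matrix n n 𝕜} (hA : A.PosSemidef) : Matrix n n 𝕜 :=
  hA.1.eigenvectorUnitary.1 * diagonal ((↑) ∘ (√·) ∘ hA.1.eigenvalues) *
  (star hA.1.eigenvectorUnitary : Matrix n n 𝕜)

namespace Matrix

open scoped ComplexOrder in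
theorem PosSemidef.sqrt_mul_self {n 𝕜 : Type*} [Fintype n] [DecidableEq n] [RCLike 𝕜]
    {A : Matrix n n 𝕜} (hA : A.PosSemidef) : hA.sqrt * hA.sqrt = A := by
  set U : Matrix n n 𝕜 := hA.1.eigenvectorUnitary.1
  have hU : star U * U = 1 := congrArg Subtype.val (Unitary.star_mul_self hA.1.eigenvectorUnitary)
  have hD : diagonal (((↑) ∘ (√·) ∘ hA.1.eigenvalues : n → 𝕜)) *
      diagonal (((↑) ∘ (√·) ∘ hA.1.eigenvalues : n → 𝕜)) =
      diagonal (RCLike.ofReal ∘ hA.1.eigenvalues : n → 𝕜) := by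
    rw [diagonal_mul_diagonal]
    congr 1
    ext i
    simp only [Function.comp, ← RCLike.ofReal_mul, Real.mul_self_sqrt (hA.eigenvalues_nonneg i)]
  conv_rhs => rw [hA.1.spectral_theorem, Unitary.conjStarAlgAut_apply]
  simp only [PosSemidef.sqrt, Matrix.mul_assoc]
  rw [← Matrix.mul_assoc (star U), hU, Matrix.one_mul, ← Matrix.mul_assoc (diagonal _), hD]

section Field

variable {n K : Type*} [Fintype n] [DecidableEq n] [Field K]

theorem exists_mulVec_eq_smul_mul_self_mulVec_of_inv_mul_mul_inv {S B : Matrix n n K}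
    (hS : IsUnit S) {v : n → K} (hv : v ≠ 0) {lam : K}
    (h : (S⁻¹ * B * S⁻¹) *ᵥ v = lam • v) :
    ∃ u : n → K, u ≠ 0 ∧ B *ᵥ u = lam • ((S * S) *ᵥ u) := by
  have hdet : IsUnit S.det := (isUnit_iff_isUnit_det S).mp hS
  refine ⟨S⁻¹ *ᵥ v, fun hu => hv ?_, ?_⟩
  · rw [← one_mulVec v, ← mul_nonsing_inv S hdet, ← mulVec_mulVec, hu, mulVec_zero]
  · have hSv := congrArg (S *ᵥ ·) h
    simp only [mulVec_mulVec, mulVec_smul, ← Matrix.mul_assoc, mul_nonsing_inv S hdet,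
      Matrix.one_mul] at hSv
    rwa [mulVec_mulVec, mulVec_mulVec, Matrix.mul_assoc S S, mul_nonsing_inv S hdet,
      Matrix.mul_one]

theorem exists_mul_inv_mul_mulVec_eq_smul {T J : Matrix n n K} (hJ : IsUnit J) {u : n → K}
    (hu : u ≠ 0) {μ : K} (h : (T * T) *ᵥ u = μ • (J *ᵥ u)) :
    ∃ w : n → K, w ≠ 0 ∧ (T * J⁻¹ * T) *ᵥ w = μ • w := by
  have hdet : IsUnit J.det := (isUnit_iff_isUnit_det J).mp hJ
  by_cases hTu : T *ᵥ u = 0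
  · refine ⟨u, hu, ?_⟩
    have hJu : J *ᵥ u ≠ 0 := by
      simpa using (mulVec_injective_iff_isUnit.mpr hJ).ne hu
    have hμ : μ = 0 := by
      rw [← mulVec_mulVec, hTu, mulVec_zero] at h
      exact (smul_eq_zero.mp h.symm).resolve_right hJu
    rw [hμ, zero_smul, ← mulVec_mulVec, hTu, mulVec_zero]
  · refine ⟨T *ᵥ u, hTu, ?_⟩
    calc (T * J⁻¹ * T) *ᵥ (T *ᵥ u) = (T * J⁻¹) *ᵥ ((T * T) *ᵥ u) := by
          simp only [mulVec_mulVec, Matrix.mul_assoc]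
      _ = μ • (T *ᵥ u) := by
          rw [h, mulVec_smul, mulVec_mulVec, Matrix.mul_assoc, nonsing_inv_mul J hdet,
            Matrix.mul_one]

end Field

theorem generalized_eigenvalue_mem_Ico {n : Type*} [Fintype n] {J Γ : Matrix n n ℝ}
    (hJ : J.PosDef) (hΓ : Γ.PosSemidef) {u : n → ℝ} (hu : u ≠ 0) {lam : ℝ}
    (h : Γ *ᵥ u = lam • ((J + Γ) *ᵥ u)) : lam ∈ Set.Ico 0 1 := by
  have ha : 0 ≤ u ⬝ᵥ Γ *ᵥ u := by simpa using hΓ.dotProduct_mulVec_nonneg u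
  have hb : 0 < u ⬝ᵥ J *ᵥ u := by simpa using hJ.dotProduct_mulVec_pos hu
  have hab : u ⬝ᵥ Γ *ᵥ u = lam * (u ⬝ᵥ J *ᵥ u + u ⬝ᵥ Γ *ᵥ u) := by
    rw [← dotProduct_add, ← add_mulVec, ← smul_eq_mul, ← dotProduct_smul, ← h]
  constructor <;> nlinarith

end Matrix

theorem eq_div_one_sub_smul_of_eq_smul_add {K V : Type*} [Field K] [AddCommGroup V] [Module K V]
    {x y : V} {lam : K} (hlam : lam ≠ 1) (h : x = lam • (y + x)) :
    x = (lam / (1 - lam)) • y := by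
  have h1 : (1 - lam) • x = lam • y := by
    rw [sub_smul, one_smul, sub_eq_iff_eq_add]
    nth_rewrite 1 [h]
    rw [smul_add]
  rw [div_eq_inv_mul, mul_smul, ← h1, smul_smul, inv_mul_cancel₀ (sub_ne_zero.mpr hlam.symm),
    one_smul]

theorem eigenvalue_H_transform {n : ℕ} (J Γ : Matrix (Fin n) (Fin n) ℝ)
    (hJ : J.PosDef) (hΓ : Γ.PosSemidef) (lam : ℝ)
    (hlam : ∃ v : Fin n → ℝ, v ≠ 0 ∧
      (((hJ.posSemidef.add hΓ).sqrt)⁻¹ * Γ * ((hJ.posSemidef.add hΓ).sqrt)⁻¹) *ᵥ v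
        = lam • v) :
    lam ≠ 1 ∧ 0 ≤ lam ∧ lam < 1 ∧
    ∃ w : Fin n → ℝ, w ≠ 0 ∧
      (hΓ.sqrt * J⁻¹ * hΓ.sqrt) *ᵥ w = (lam / (1 - lam)) • w := by
  obtain ⟨v, hv, hHv⟩ := hlam
  have hS := (hJ.posSemidef.add hΓ).sqrt_mul_self
  have hSunit : IsUnit (hJ.posSemidef.add hΓ).sqrt :=
    isUnit_of_mul_isUnit_left (hS ▸ (hJ.add_posSemidef hΓ).isUnit)
  obtain ⟨u, hu, hΓu⟩ := exists_mulVec_eq_smul_mul_self_mulVec_of_inv_mul_mul_inv hSunit hv hHv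
  rw [hS] at hΓu
  obtain ⟨hlam0, hlam1⟩ := generalized_eigenvalue_mem_Ico hJ hΓ hu hΓu
  refine ⟨hlam1.ne, hlam0, hlam1, exists_mul_inv_mul_mulVec_eq_smul hJ.isUnit hu ?_⟩
  rw [hΓ.sqrt_mul_self]
  rw [add_mulVec] at hΓu
  exact eq_div_one_sub_smul_of_eq_smul_add hlam1.ne hΓu
end

section
/- Let J ≻ 0 be symmetric positive definite, Γ ⪰ 0 symmetric positive semidefinite, h ∈ ℝ^n. Define the iteration x^{(t+1)} = (J+Γ)^{-1}(h + Γ x^{(t)}). Then for every initialization x^{(0)}, the sequence x^{(t)} converges to x* = J^{-1} h. -/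
/-!
With `S = J + Γ`, each step multiplies the error `x t - J⁻¹ h` by `S⁻¹ Γ`, so it suffices that
`(S⁻¹ Γ) ^ t → 0`. Writing `S = R * R` with `R` Hermitian, `S⁻¹ Γ = R⁻¹ A R` for the Hermitian
matrix `A = R⁻¹ Γ R⁻¹`, which is positive semidefinite with `1 - A = R⁻¹ J R⁻¹` positive
definite. Hence the eigenvalues of `A` lie in `[0, 1)`, and `A ^ t → 0` by the spectral theorem.
-/

open Matrix Filter Topology
open scoped ComplexOrder MatrixOrder

section

variable {𝕜 ι : Type*} [RCLike 𝕜] [Fintype ι] [DecidableEq ι]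

namespace Matrix.IsHermitian

theorem tendsto_pow_nhds_zero {A : Matrix ι ι 𝕜} (hA : A.IsHermitian)
    (h : ∀ i, |hA.eigenvalues i| < 1) : Tendsto (A ^ ·) atTop (𝓝 0) := by
  set U := (hA.eigenvectorUnitary : Matrix ι ι 𝕜)
  have hpow : ∀ t : ℕ,
      A ^ t = U * diagonal (fun i ↦ (hA.eigenvalues i : 𝕜) ^ t) * star U := by
    intro t
    conv_lhs => rw [hA.spectral_theorem, ← map_pow, diagonal_pow]
    rfl
  have hdiag : Tendsto (fun t : ℕ ↦ diagonal (fun i ↦ (hA.eigenvalues i : 𝕜) ^ t))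
      atTop (𝓝 0) := by
    rw [← diagonal_zero]
    refine continuous_id.matrix_diagonal.continuousAt.tendsto.comp
      (tendsto_pi_nhds.mpr fun i ↦ ?_)
    exact tendsto_pow_atTop_nhds_zero_of_norm_lt_one (by simpa using h i)
  simpa [hpow] using (tendsto_const_nhds (x := U)).mul hdiag |>.mul_const (star U)

theorem eigenvalues_lt_one_of_posDef_one_sub {A : Matrix ι ι 𝕜} (hA : A.IsHermitian)
    (h : (1 - A).PosDef) (i : ι) : hA.eigenvalues i < 1 := by
  set v := hA.eigenvectorBasis i
  have hv : (v : ι → 𝕜) ≠ 0 := by simpa using hA.eigenvectorBasis.orthonormal.ne_zero i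
  have hvv : star (v : ι → 𝕜) ⬝ᵥ v = 1 := by
    rw [dotProduct_comm, ← EuclideanSpace.inner_eq_star_dotProduct, inner_self_eq_norm_sq_to_K,
      hA.eigenvectorBasis.orthonormal.1 i]
    simp
  have hpos := h.dotProduct_mulVec_pos hv
  rwa [sub_mulVec, one_mulVec, hA.mulVec_eigenvectorBasis, dotProduct_sub, dotProduct_smul, hvv,
    RCLike.real_smul_eq_coe_mul, mul_one, ← RCLike.ofReal_one, ← RCLike.ofReal_sub,
    RCLike.ofReal_pos, sub_pos] at hpos

end Matrix.IsHermitian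

theorem Matrix.PosDef.exists_isHermitian_isUnit_mul_self_eq {S : Matrix ι ι 𝕜} (hS : S.PosDef) :
    ∃ R : Matrix ι ι 𝕜, R.IsHermitian ∧ IsUnit R ∧ R * R = S :=
  ⟨CFC.sqrt S, (CFC.sqrt_nonneg S).posSemidef.isHermitian,
    (CFC.isUnit_sqrt_iff S hS.posSemidef.nonneg).mpr hS.isUnit,
    CFC.sqrt_mul_sqrt_self S hS.posSemidef.nonneg⟩

theorem Matrix.conj_nonsing_inv_pow {R A : Matrix ι ι 𝕜} (hR : IsUnit R) (t : ℕ) :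
    (R⁻¹ * A * R) ^ t = R⁻¹ * A ^ t * R := by
  simpa [coe_units_inv] using Units.conj_pow' hR.unit A t

theorem Matrix.PosDef.tendsto_pow_inv_add_mul_nhds_zero {J Γ : Matrix ι ι 𝕜} (hJ : J.PosDef)
    (hΓ : Γ.PosSemidef) : Tendsto (((J + Γ)⁻¹ * Γ) ^ ·) atTop (𝓝 0) := by
  obtain ⟨R, hR, hRunit, hRR⟩ := (hJ.add_posSemidef hΓ).exists_isHermitian_isUnit_mul_self_eq
  have hRinv : R⁻¹ᴴ = R⁻¹ := hR.inv
  have hR_inv_mul : R⁻¹ * R = 1 := nonsing_inv_mul R ((isUnit_iff_isUnit_det R).mp hRunit)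
  have hR_mul_inv : R * R⁻¹ = 1 := mul_nonsing_inv R ((isUnit_iff_isUnit_det R).mp hRunit)
  have hA : (R⁻¹ * Γ * R⁻¹).PosSemidef := by
    simpa only [hRinv] using hΓ.mul_mul_conjTranspose_same R⁻¹
  have hA_lt : (1 - R⁻¹ * Γ * R⁻¹).PosDef := by
    have hSR : R⁻¹ * (J + Γ) * R⁻¹ = 1 := by
      rw [← hRR, ← Matrix.mul_assoc, hR_inv_mul, Matrix.one_mul, hR_mul_inv]
    have hJR : 1 - R⁻¹ * Γ * R⁻¹ = R⁻¹ * J * R⁻¹ᴴ := by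
      rw [hRinv, ← hSR, Matrix.mul_add, Matrix.add_mul, add_sub_cancel_right]
    rw [hJR]
    exact hJ.mul_mul_conjTranspose_same
      (vecMul_injective_iff_isUnit.mpr (isUnit_nonsing_inv_iff.mpr hRunit))
  have hM : (J + Γ)⁻¹ * Γ = R⁻¹ * (R⁻¹ * Γ * R⁻¹) * R := by
    rw [← hRR, Matrix.mul_inv_rev]
    simp only [Matrix.mul_assoc, hR_inv_mul, Matrix.mul_one]
  have hA_pow := hA.isHermitian.tendsto_pow_nhds_zero fun i ↦ abs_lt.mpr
    ⟨by linarith [hA.eigenvalues_nonneg i],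
      hA.isHermitian.eigenvalues_lt_one_of_posDef_one_sub hA_lt i⟩
  simpa [hM, conj_nonsing_inv_pow hRunit] using
    (tendsto_const_nhds (x := R⁻¹)).mul hA_pow |>.mul_const R

end

theorem Matrix.tendsto_of_sub_succ_eq_mulVec {R ι : Type*} [Ring R] [TopologicalSpace R]
    [IsTopologicalRing R] [Fintype ι] [DecidableEq ι] {M : Matrix ι ι R}
    (hM : Tendsto (M ^ ·) atTop (𝓝 0)) {x : ℕ → ι → R} {x' : ι → R}
    (hx : ∀ t, x (t + 1) - x' = M *ᵥ (x t - x')) : Tendsto x atTop (𝓝 x') := by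
  have herr : ∀ t, x t - x' = M ^ t *ᵥ (x 0 - x') := by
    intro t
    induction t with
    | zero => simp
    | succ t ih => rw [hx, ih, mulVec_mulVec, pow_succ']
  rw [← tendsto_sub_nhds_zero_iff, funext herr, ← zero_mulVec (x 0 - x')]
  exact (continuous_id.matrix_mulVec continuous_const).continuousAt.tendsto.comp hM

theorem iteration_converges {n : ℕ} (J Γ : Matrix (Fin n) (Fin n) ℝ)
    (hJ : J.PosDef) (hΓ : Γ.PosSemidef) (h : Fin n → ℝ)
    (x : ℕ → Fin n → ℝ)
    (hx : ∀ t, x (t + 1) = (J + Γ)⁻¹ *ᵥ (h + Γ *ᵥ x t)) :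
    Tendsto x atTop (nhds (J⁻¹ *ᵥ h)) := by
  have hJdet : IsUnit J.det := (isUnit_iff_isUnit_det J).mp hJ.isUnit
  have hSdet : IsUnit (J + Γ).det := (isUnit_iff_isUnit_det _).mp (hJ.add_posSemidef hΓ).isUnit
  have hfix : h + Γ *ᵥ (J⁻¹ *ᵥ h) = (J + Γ) *ᵥ (J⁻¹ *ᵥ h) := by
    rw [add_mulVec, mulVec_mulVec h J, mul_nonsing_inv J hJdet, one_mulVec]
  refine tendsto_of_sub_succ_eq_mulVec (hJ.tendsto_pow_inv_add_mul_nhds_zero hΓ) fun t ↦ ?_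
  calc x (t + 1) - J⁻¹ *ᵥ h
      = (J + Γ)⁻¹ *ᵥ (h + Γ *ᵥ x t) - (J + Γ)⁻¹ *ᵥ (h + Γ *ᵥ (J⁻¹ *ᵥ h)) := by
        rw [hx, hfix, mulVec_mulVec, nonsing_inv_mul _ hSdet, one_mulVec]
    _ = ((J + Γ)⁻¹ * Γ) *ᵥ (x t - J⁻¹ *ᵥ h) := by
        rw [← mulVec_sub, add_sub_add_left_eq_sub, ← mulVec_sub, mulVec_mulVec]
end
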